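/- arXiv:1310.5930 — 3 statements merged into one kernel-verified Lean document; each statement's English description precedes it below -/
import Mathlib

section
/- Let x_n > 0 be the distance from a point noise source to the center of a spherical receiver of radius r_obs > 0, and set r_dif = r_obs − x_n, r_sum = r_obs + x_n, and β = sgn(r_dif). Then for every t > 0, the time-varying impact integral in the absence of flow and molecule degradation satisfies ∫₀^t { (1/2)[erf((r_obs − x_n)/(2√τ)) + erf((r_obs + x_n)/(2√τ))] + (1/x_n)·√(τ/π)·[exp(−r_sum²/(4τ)) − exp(−r_dif²/(4τ))] } dτ = erf(r_dif/(2√t))·[r_dif²/4 + t/2 + r_dif³/(6 x_n)] + erf(r_sum/(2√t))·[r_sum²/4 + t/2 − r_sum³/(6 x_n)] + √(t/π)·exp(−r_dif²/(4t))·[r_dif/2 − 2t/(3 x_n) + r_dif²/(3 x_n)] + √(t/π)·exp(−r_sum²/(4t))·[r_sum/2 + 2t/(3 x_n) − r_sum²/(3 x_n)] − β·r_dif²/4 − r_sum²/4 + r_sum³/(6 x_n) − |r_dif|³/(6 x_n). -/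
/-! The integrand is a linear combination of the kernels `erf (r / (2√τ))` and
`√(τ/π) exp (-r²/(4τ))` with `r = r_dif, r_sum`, and both kernels have elementary
antiderivatives on `(0, ∞)`, namely
`(τ + r²/2) erf (r/(2√τ)) + r √(τ/π) exp (-r²/(4τ))` and
`-(r³/6) erf (r/(2√τ)) + (2τ/3 - r²/3) √(τ/π) exp (-r²/(4τ))`.
As `τ → 0⁺` the Gaussian factor kills the second summands while `erf (r/(2√τ)) → sign r`;
this is where the constants `β r_dif²` and `|r_dif|³` of the closed form come from. -/

open Real MeasureTheory

/-- The error function `erf a = (2/√π) ∫₀^a exp(−b²) db`. -/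
noncomputable def erf (a : ℝ) : ℝ := (2 / Real.sqrt π) * ∫ b in (0:ℝ)..a, Real.exp (-b^2)

open Filter Topology Set

lemma intervalIntegrable_of_abs_le {f : ℝ → ℝ} {a b C : ℝ} (hab : a ≤ b) (hf : Measurable f)
    (hC : ∀ τ ∈ Ioc a b, |f τ| ≤ C) : IntervalIntegrable f volume a b :=
  (intervalIntegrable_iff_integrableOn_Ioc_of_le hab).2 <|
    Measure.integrableOn_of_bounded measure_Ioc_lt_top.ne hf.aestronglyMeasurable
      (ae_restrict_of_forall_mem measurableSet_Ioc hC)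

lemma sign_mul_pow_of_odd {n : ℕ} (hn : Odd n) (r : ℝ) : sign r * r ^ n = |r| ^ n := by
  rcases lt_trichotomy r 0 with hr | rfl | hr
  · rw [sign_of_neg hr, abs_of_neg hr, neg_one_mul, hn.neg_pow]
  · simp [hn.pos.ne']
  · rw [sign_of_pos hr, abs_of_pos hr, one_mul]

lemma hasDerivAt_erf (a : ℝ) : HasDerivAt erf (2 / √π * exp (-a ^ 2)) a := by
  have hc : Continuous fun b : ℝ => exp (-b ^ 2) := by fun_prop
  exact (intervalIntegral.integral_hasDerivAt_right (hc.intervalIntegrable _ _)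
    hc.stronglyMeasurable.stronglyMeasurableAtFilter hc.continuousAt).const_mul _

lemma continuous_erf : Continuous erf :=
  continuous_iff_continuousAt.2 fun a => (hasDerivAt_erf a).continuousAt

lemma monotone_erf : Monotone erf :=
  monotone_of_deriv_nonneg (fun a => (hasDerivAt_erf a).differentiableAt)
    fun a => (hasDerivAt_erf a).deriv ▸ by positivity

lemma erf_neg (a : ℝ) : erf (-a) = -erf a := by
  have h := intervalIntegral.integral_comp_neg (a := 0) (b := a) fun b => exp (-b ^ 2)
  simp only [neg_zero, neg_sq] at h
  rw [erf, erf, h, intervalIntegral.integral_symm, mul_neg]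

lemma tendsto_erf_atTop : Tendsto erf atTop (𝓝 1) := by
  have hint : IntegrableOn (fun b : ℝ => exp (-b ^ 2)) (Ioi 0) := by
    simpa using (integrable_exp_neg_mul_sq one_pos).integrableOn
  have h := (intervalIntegral_tendsto_integral_Ioi 0 hint tendsto_id).const_mul (2 / √π)
  rw [show ∫ b in Ioi (0:ℝ), exp (-b ^ 2) = √π / 2 by simpa using integral_gaussian_Ioi 1] at h
  rwa [div_mul_div_cancel₀ (by positivity), div_self two_ne_zero] at h

lemma abs_erf_le_one (a : ℝ) : |erf a| ≤ 1 := by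
  have h : ∀ b, erf b ≤ 1 := fun b => monotone_erf.ge_of_tendsto tendsto_erf_atTop b
  exact abs_le.2 ⟨by linarith [h (-a), erf_neg a], h a⟩

lemma tendsto_div_two_sqrt_nhdsGT_zero {r : ℝ} (hr : 0 < r) :
    Tendsto (fun τ : ℝ => r / (2 * √τ)) (𝓝[>] 0) atTop := by
  have h : Tendsto (fun τ : ℝ => 2 * √τ / r) (𝓝[>] 0) (𝓝[>] 0) := by
    refine tendsto_nhdsWithin_iff.2 ⟨?_, ?_⟩
    · simpa using ((by fun_prop : Continuous fun τ : ℝ => 2 * √τ / r).tendsto 0).mono_left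
        nhdsWithin_le_nhds
    · filter_upwards [self_mem_nhdsWithin] with τ (hτ : 0 < τ)
      have := sqrt_pos.2 hτ
      exact mem_Ioi.2 (by positivity)
  simpa only [Function.comp_def, inv_div] using tendsto_inv_nhdsGT_zero.comp h

lemma tendsto_erf_div_two_sqrt_nhdsGT_zero (r : ℝ) :
    Tendsto (fun τ : ℝ => erf (r / (2 * √τ))) (𝓝[>] 0) (𝓝 (sign r)) := by
  rcases lt_trichotomy r 0 with hr | rfl | hr
  · rw [sign_of_neg hr]
    refine (tendsto_erf_atTop.comp (tendsto_div_two_sqrt_nhdsGT_zero (neg_pos.2 hr))).neg.congr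
      fun τ => ?_
    rw [Function.comp_apply, neg_div, erf_neg, neg_neg]
  · simp [erf]
  · rw [sign_of_pos hr]
    exact tendsto_erf_atTop.comp (tendsto_div_two_sqrt_nhdsGT_zero hr)

lemma sqrt_mul_exp_le_sqrt (r : ℝ) {τ : ℝ} (hτ : 0 ≤ τ) :
    √(τ / π) * exp (-r ^ 2 / (4 * τ)) ≤ √(τ / π) :=
  mul_le_of_le_one_right (sqrt_nonneg _) <| exp_le_one_iff.2 <|
    div_nonpos_of_nonpos_of_nonneg (neg_nonpos.2 (sq_nonneg r)) (by positivity)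

lemma tendsto_sqrt_mul_exp_nhdsGT_zero (r : ℝ) :
    Tendsto (fun τ : ℝ => √(τ / π) * exp (-r ^ 2 / (4 * τ))) (𝓝[>] 0) (𝓝 0) := by
  have hsqrt : Tendsto (fun τ : ℝ => √(τ / π)) (𝓝[>] 0) (𝓝 0) := by
    simpa using ((by fun_prop : Continuous fun τ : ℝ => √(τ / π)).tendsto 0).mono_left
      nhdsWithin_le_nhds
  refine tendsto_of_tendsto_of_tendsto_of_le_of_le' tendsto_const_nhds hsqrt
    (Eventually.of_forall fun τ => by positivity) ?_
  filter_upwards [self_mem_nhdsWithin] with τ (hτ : 0 < τ)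
  exact sqrt_mul_exp_le_sqrt r hτ.le

lemma hasDerivAt_erf_div_two_sqrt (r : ℝ) {τ : ℝ} (hτ : 0 < τ) :
    HasDerivAt (fun τ : ℝ => erf (r / (2 * √τ)))
      (-(r * exp (-r ^ 2 / (4 * τ)) / (2 * √π * τ * √τ))) τ := by
  have hsqrt := sqrt_pos.2 hτ
  have hinner : HasDerivAt (fun τ : ℝ => r / (2 * √τ))
      ((0 * (2 * √τ) - r * (2 * (1 / (2 * √τ)))) / (2 * √τ) ^ 2) τ :=
    (hasDerivAt_const τ r).div ((hasDerivAt_sqrt hτ.ne').const_mul 2) (by positivity)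
  have h := (hasDerivAt_erf _).comp τ hinner
  have hsq : (r / (2 * √τ)) ^ 2 = r ^ 2 / (4 * τ) := by
    rw [div_pow, mul_pow, sq_sqrt hτ.le]; norm_num
  rw [Function.comp_def, hsq] at h
  refine h.congr_deriv ?_
  have := sqrt_pos.2 pi_pos
  obtain ⟨u, hu, rfl⟩ : ∃ u, 0 < u ∧ u ^ 2 = τ := ⟨√τ, hsqrt, sq_sqrt hτ.le⟩
  rw [sqrt_sq hu.le]
  field_simp
  ring

lemma hasDerivAt_sqrt_mul_exp (r : ℝ) {τ : ℝ} (hτ : 0 < τ) :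
    HasDerivAt (fun τ : ℝ => √(τ / π) * exp (-r ^ 2 / (4 * τ)))
      (exp (-r ^ 2 / (4 * τ)) * (τ + r ^ 2 / 2) / (2 * √π * τ * √τ)) τ := by
  have hsqrt := sqrt_pos.2 hτ
  have hinner : HasDerivAt (fun τ : ℝ => -r ^ 2 / (4 * τ))
      ((0 * (4 * τ) - -r ^ 2 * 4) / (4 * τ) ^ 2) τ :=
    (hasDerivAt_const τ (-r ^ 2)).div ((hasDerivAt_id' τ).const_mul 4 |>.congr_deriv (mul_one 4))
      (by positivity)
  have h := ((hasDerivAt_sqrt hτ.ne').div_const √π).mul hinner.exp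
  have heq : (fun τ : ℝ => √(τ / π) * exp (-r ^ 2 / (4 * τ)))
      =ᶠ[𝓝 τ] fun τ => √τ / √π * exp (-r ^ 2 / (4 * τ)) := by
    filter_upwards [Ioi_mem_nhds hτ] with σ hσ
    rw [sqrt_div (le_of_lt hσ)]
  refine (h.congr_of_eventuallyEq heq).congr_deriv ?_
  have := sqrt_pos.2 pi_pos
  obtain ⟨u, hu, rfl⟩ : ∃ u, 0 < u ∧ u ^ 2 = τ := ⟨√τ, hsqrt, sq_sqrt hτ.le⟩
  rw [sqrt_sq hu.le]
  field_simp
  ring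

lemma intervalIntegrable_erf_div_two_sqrt (r : ℝ) {t : ℝ} (ht : 0 ≤ t) :
    IntervalIntegrable (fun τ => erf (r / (2 * √τ))) volume 0 t :=
  intervalIntegrable_of_abs_le ht (continuous_erf.measurable.comp (by fun_prop))
    fun τ _ => abs_erf_le_one _

theorem integral_erf_div_two_sqrt (r : ℝ) {t : ℝ} (ht : 0 < t) :
    ∫ τ in (0:ℝ)..t, erf (r / (2 * √τ))
      = erf (r / (2 * √t)) * (t + r ^ 2 / 2) + r * (√(t / π) * exp (-r ^ 2 / (4 * t)))
        - sign r * r ^ 2 / 2 := by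
  have hderiv : ∀ τ : ℝ, 0 < τ → HasDerivAt
      (fun τ => erf (r / (2 * √τ)) * (τ + r ^ 2 / 2) + r * (√(τ / π) * exp (-r ^ 2 / (4 * τ))))
      (erf (r / (2 * √τ))) τ := fun τ hτ =>
    (((hasDerivAt_erf_div_two_sqrt r hτ).mul ((hasDerivAt_id' τ).add_const _)).add
      ((hasDerivAt_sqrt_mul_exp r hτ).const_mul r)).congr_deriv (by ring)
  have hzero := ((tendsto_erf_div_two_sqrt_nhdsGT_zero r).mul
    (((continuous_add_const (r ^ 2 / 2)).tendsto 0).mono_left nhdsWithin_le_nhds)).add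
    ((tendsto_sqrt_mul_exp_nhdsGT_zero r).const_mul r)
  rw [intervalIntegral.integral_eq_sub_of_hasDerivAt_of_tendsto ht (fun τ hτ => hderiv τ hτ.1)
    (intervalIntegrable_erf_div_two_sqrt r ht.le) hzero
    (hderiv t ht).continuousAt.continuousWithinAt]
  ring

lemma intervalIntegrable_sqrt_mul_exp (r : ℝ) {t : ℝ} (ht : 0 ≤ t) :
    IntervalIntegrable (fun τ => √(τ / π) * exp (-r ^ 2 / (4 * τ))) volume 0 t :=
  intervalIntegrable_of_abs_le (C := √(t / π)) ht (by fun_prop) fun τ hτ => by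
    rw [abs_of_nonneg (by positivity)]
    exact (sqrt_mul_exp_le_sqrt r hτ.1.le).trans
      (sqrt_le_sqrt (div_le_div_of_nonneg_right hτ.2 pi_pos.le))

theorem integral_sqrt_mul_exp (r : ℝ) {t : ℝ} (ht : 0 < t) :
    ∫ τ in (0:ℝ)..t, √(τ / π) * exp (-r ^ 2 / (4 * τ))
      = -(r ^ 3 / 6) * erf (r / (2 * √t))
        + (2 * t / 3 - r ^ 2 / 3) * (√(t / π) * exp (-r ^ 2 / (4 * t))) + |r| ^ 3 / 6 := by
  have hderiv : ∀ τ : ℝ, 0 < τ → HasDerivAt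
      (fun τ => -(r ^ 3 / 6) * erf (r / (2 * √τ))
        + (2 * τ / 3 - r ^ 2 / 3) * (√(τ / π) * exp (-r ^ 2 / (4 * τ))))
      (√(τ / π) * exp (-r ^ 2 / (4 * τ))) τ := by
    intro τ hτ
    have hlin : HasDerivAt (fun τ : ℝ => 2 * τ / 3 - r ^ 2 / 3) (2 / 3) τ := by
      simpa using (((hasDerivAt_id' τ).const_mul 2).div_const 3).sub_const (r ^ 2 / 3)
    refine (((hasDerivAt_erf_div_two_sqrt r hτ).const_mul _).add
      (hlin.mul (hasDerivAt_sqrt_mul_exp r hτ))).congr_deriv ?_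
    have := sqrt_pos.2 pi_pos
    rw [sqrt_div hτ.le]
    obtain ⟨u, hu, rfl⟩ : ∃ u, 0 < u ∧ u ^ 2 = τ := ⟨√τ, sqrt_pos.2 hτ, sq_sqrt hτ.le⟩
    rw [sqrt_sq hu.le]
    field_simp
    ring
  have hzero := ((tendsto_erf_div_two_sqrt_nhdsGT_zero r).const_mul (-(r ^ 3 / 6))).add
    ((((by fun_prop : Continuous fun τ : ℝ => 2 * τ / 3 - r ^ 2 / 3).tendsto 0).mono_left
      nhdsWithin_le_nhds).mul (tendsto_sqrt_mul_exp_nhdsGT_zero r))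
  rw [intervalIntegral.integral_eq_sub_of_hasDerivAt_of_tendsto ht (fun τ hτ => hderiv τ hτ.1)
    (intervalIntegrable_sqrt_mul_exp r ht.le) hzero (hderiv t ht).continuousAt.continuousWithinAt,
    ← sign_mul_pow_of_odd (by decide : Odd 3)]
  ring

/-- Time-varying impact of a continuously-emitting noise source in the absence of flow and
molecule degradation (Theorem 2 of the paper). -/
theorem time_varying_impact_no_flow_no_degradation (x_n r_obs r_dif r_sum β : ℝ)
    (hx : 0 < x_n) (hr : 0 < r_obs)
    (hdif : r_dif = r_obs - x_n) (hsum : r_sum = r_obs + x_n)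
    (hβ : β = Real.sign r_dif) :
    ∀ t > (0:ℝ),
    (∫ τ in (0:ℝ)..t,
      ((1/2) * (erf ((r_obs - x_n) / (2 * Real.sqrt τ))
                 + erf ((r_obs + x_n) / (2 * Real.sqrt τ)))
        + (1/x_n) * Real.sqrt (τ/π)
            * (Real.exp (-(r_sum^2) / (4*τ)) - Real.exp (-(r_dif^2) / (4*τ)))))
    = erf (r_dif / (2 * Real.sqrt t)) * (r_dif^2/4 + t/2 + r_dif^3/(6*x_n))
      + erf (r_sum / (2 * Real.sqrt t)) * (r_sum^2/4 + t/2 - r_sum^3/(6*x_n))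
      + Real.sqrt (t/π) * Real.exp (-(r_dif^2) / (4*t))
          * (r_dif/2 - 2*t/(3*x_n) + r_dif^2/(3*x_n))
      + Real.sqrt (t/π) * Real.exp (-(r_sum^2) / (4*t))
          * (r_sum/2 + 2*t/(3*x_n) - r_sum^2/(3*x_n))
      - β * r_dif^2/4 - r_sum^2/4 + r_sum^3/(6*x_n) - |r_dif|^3/(6*x_n) := by
  intro t ht
  have hsum_pos : 0 < r_sum := by linarith
  rw [← hdif, ← hsum, hβ]
  set E : ℝ → ℝ → ℝ := fun r τ => erf (r / (2 * √τ))
  set G : ℝ → ℝ → ℝ := fun r τ => √(τ / π) * exp (-r ^ 2 / (4 * τ))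
  have hE r c : IntervalIntegrable (fun τ => c * E r τ) volume 0 t :=
    (intervalIntegrable_erf_div_two_sqrt r ht.le).const_mul c
  have hG r c : IntervalIntegrable (fun τ => c * G r τ) volume 0 t :=
    (intervalIntegrable_sqrt_mul_exp r ht.le).const_mul c
  calc _ = ∫ τ in (0:ℝ)..t, ((1/2) * E r_dif τ + (1/2) * E r_sum τ
            + (1/x_n) * G r_sum τ - (1/x_n) * G r_dif τ) := by
        congr 1; ext τ; ring
    _ = (1/2) * (∫ τ in (0:ℝ)..t, E r_dif τ) + (1/2) * (∫ τ in (0:ℝ)..t, E r_sum τ)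
          + (1/x_n) * (∫ τ in (0:ℝ)..t, G r_sum τ)
          - (1/x_n) * (∫ τ in (0:ℝ)..t, G r_dif τ) := by
        simp only [intervalIntegral.integral_const_mul,
          intervalIntegral.integral_sub (((hE _ _).add (hE _ _)).add (hG _ _)) (hG _ _),
          intervalIntegral.integral_add ((hE _ _).add (hE _ _)) (hG _ _),
          intervalIntegral.integral_add (hE _ _) (hE _ _)]
    _ = _ := by
        rw [integral_erf_div_two_sqrt _ ht, integral_erf_div_two_sqrt _ ht,
          integral_sqrt_mul_exp _ ht, integral_sqrt_mul_exp _ ht, sign_of_pos hsum_pos,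
          abs_of_pos hsum_pos]
        ring
end

section
/- For every b ≥ 0 and every c > 0, one has ∫₀^∞ a^{−3/2} · exp(−b·a − c/a) da = √(π/c) · exp(−2√(b·c)). -/
/-!
Substituting `a = c / x ^ 2` turns the integral into `(2 / √c) ∫₀^∞ exp (-x² - bc/x²) dx`, and
`x² + t/x² = (x - √t/x)² + 2√t`. The remaining integral `∫₀^∞ exp (-(x - s/x)²) dx` is Glasser's:
`u = x - s/x` maps `(0, ∞)` bijectively onto `ℝ` with `du = (1 + s/x²) dx`, so
`∫₀^∞ (1 + s/x²) exp (-(x - s/x)²) dx = √π`, and the inversion `x ↦ s/x`, which preserves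
`exp (-(x - s/x)²)`, shows that the two summands contribute equally.
-/

open Real MeasureTheory Set

section ChangeOfVariables

variable {E : Type*} [NormedAddCommGroup E] [NormedSpace ℝ E] {s : ℝ}

theorem integral_comp_div_pow_Ioi (g : ℝ → E) (hs : 0 < s) {n : ℕ} (hn : n ≠ 0) :
    ∫ x in Ioi 0, (n * s / x ^ (n + 1)) • g (s / x ^ n) = ∫ y in Ioi 0, g y := by
  have h := integral_comp_rpow_Ioi (fun y => g (s * y)) (p := -n) (by simpa using hn)
  rw [integral_comp_mul_left_Ioi g 0 hs, mul_zero] at h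
  rw [← smul_inv_smul₀ hs.ne' (∫ y in Ioi 0, g y), ← h, ← integral_smul]
  refine setIntegral_congr_fun measurableSet_Ioi fun x (hx : 0 < x) => ?_
  have hpow : ∀ m : ℕ, x ^ (-(m : ℝ)) = (x ^ m)⁻¹ := fun m => by
    rw [rpow_neg hx.le, rpow_natCast]
  simp only [smul_smul, abs_neg, Nat.abs_cast, show -(n : ℝ) - 1 = -((n + 1 : ℕ) : ℝ) by
    push_cast; ring, hpow, div_eq_mul_inv]
  ring_nf

lemma injOn_sub_div_Ioi (hs : 0 ≤ s) : InjOn (fun x => x - s / x) (Ioi 0) := by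
  intro x (hx : 0 < x) y (hy : 0 < y) h
  field_simp at h
  nlinarith [mul_pos hx hy]

lemma image_sub_div_Ioi (hs : 0 < s) : (fun x => x - s / x) '' Ioi 0 = univ := by
  refine eq_univ_of_forall fun y => ?_
  -- the positive root of `x ^ 2 - y * x - s`
  set r := √(y ^ 2 + 4 * s)
  have hr : r ^ 2 = y ^ 2 + 4 * s := sq_sqrt (by positivity)
  have hyr : -y < r := by nlinarith [sqrt_nonneg (y ^ 2 + 4 * s), sq_nonneg (r + y)]
  refine ⟨(y + r) / 2, by simp only [mem_Ioi]; linarith, ?_⟩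
  have hdiv : s / ((y + r) / 2) = (r - y) / 2 := by
    rw [div_eq_iff (by linarith)]; linear_combination -hr / 4
  simp only [hdiv]; ring

lemma hasDerivAt_sub_div (s : ℝ) {x : ℝ} (hx : x ≠ 0) :
    HasDerivAt (fun x => x - s / x) (1 + s / x ^ 2) x := by
  simpa [div_eq_mul_inv] using (hasDerivAt_id' x).fun_sub ((hasDerivAt_inv hx).const_mul s)

theorem integral_comp_sub_div_Ioi (g : ℝ → E) (hs : 0 < s) :
    ∫ x in Ioi 0, (1 + s / x ^ 2) • g (x - s / x) = ∫ u, g u := by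
  have h := integral_image_eq_integral_abs_deriv_smul measurableSet_Ioi
    (fun x (hx : 0 < x) => (hasDerivAt_sub_div s hx.ne').hasDerivWithinAt)
    (injOn_sub_div_Ioi hs.le) g
  rw [image_sub_div_Ioi hs, setIntegral_univ] at h
  rw [h]
  refine setIntegral_congr_fun measurableSet_Ioi fun x _ => ?_
  rw [abs_of_pos (by positivity)]

theorem integrableOn_comp_sub_div_Ioi (g : ℝ → E) (hs : 0 < s) :
    IntegrableOn (fun x => (1 + s / x ^ 2) • g (x - s / x)) (Ioi 0) ↔ Integrable g := by
  have h := integrableOn_image_iff_integrableOn_abs_deriv_smul measurableSet_Ioi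
    (fun x (hx : 0 < x) => (hasDerivAt_sub_div s hx.ne').hasDerivWithinAt)
    (injOn_sub_div_Ioi hs.le) g
  rw [image_sub_div_Ioi hs, integrableOn_univ] at h
  rw [h]
  refine integrableOn_congr_fun (fun x _ => ?_) measurableSet_Ioi
  rw [abs_of_pos (by positivity)]

end ChangeOfVariables

theorem integral_exp_neg_sq_sub_div_Ioi {s : ℝ} (hs : 0 ≤ s) :
    ∫ x in Ioi 0, exp (-(x - s / x) ^ 2) = √π / 2 := by
  rcases hs.eq_or_lt with rfl | hs
  · simpa using integral_gaussian_Ioi 1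
  set e : ℝ → ℝ := fun x => exp (-(x - s / x) ^ 2)
  have hsum : IntegrableOn (fun x => (1 + s / x ^ 2) * e x) (Ioi 0) :=
    (integrableOn_comp_sub_div_Ioi _ hs).2 (by simpa using integrable_exp_neg_mul_sq one_pos)
  have he_int : IntegrableOn e (Ioi 0) := by
    refine hsum.mono' (by fun_prop) (ae_of_all _ fun x => ?_)
    rw [norm_of_nonneg (exp_pos _).le]
    nlinarith [exp_pos (-(x - s / x) ^ 2), div_nonneg hs.le (sq_nonneg x)]
  have hsymm : ∫ x in Ioi 0, s / x ^ 2 * e x = ∫ x in Ioi 0, e x := by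
    rw [← integral_comp_div_pow_Ioi e hs one_ne_zero]
    refine setIntegral_congr_fun measurableSet_Ioi fun x _ => ?_
    simp only [e, smul_eq_mul, Nat.cast_one, one_mul, pow_one, div_div_cancel₀ hs.ne']
    rw [← neg_sub x, neg_sq]
  have htotal : ∫ x in Ioi 0, (1 + s / x ^ 2) * e x = √π := by
    refine (integral_comp_sub_div_Ioi (fun u => exp (-u ^ 2)) hs).trans ?_
    simpa using integral_gaussian 1
  simp only [add_mul, one_mul] at htotal hsum
  have hweighted : IntegrableOn (fun x => s / x ^ 2 * e x) (Ioi 0) :=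
    (hsum.sub he_int).congr_fun (fun x _ => by simp only [Pi.sub_apply]; ring) measurableSet_Ioi
  rw [integral_add he_int hweighted, hsymm] at htotal
  linarith

theorem integral_exp_neg_sq_sub_div_sq_Ioi {t : ℝ} (ht : 0 ≤ t) :
    ∫ x in Ioi 0, exp (-x ^ 2 - t / x ^ 2) = √π / 2 * exp (-(2 * √t)) := by
  have h : ∀ x ∈ Ioi (0 : ℝ),
      exp (-x ^ 2 - t / x ^ 2) = exp (-(2 * √t)) * exp (-(x - √t / x) ^ 2) := by
    intro x (hx : 0 < x)
    rw [← exp_add]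
    congr 1
    field_simp
    linear_combination sq_sqrt ht
  rw [setIntegral_congr_fun measurableSet_Ioi h, integral_const_mul,
    integral_exp_neg_sq_sub_div_Ioi (sqrt_nonneg t), mul_comm]

lemma div_sq_rpow_neg_three_halves {c x : ℝ} (hc : 0 < c) (hx : 0 < x) :
    (c / x ^ 2) ^ (-(3 : ℝ) / 2) = x ^ 3 / √c ^ 3 := by
  have h : c / x ^ 2 = (√c / x) ^ 2 := by rw [div_pow, sq_sqrt hc.le]
  rw [h, ← rpow_natCast_mul (by positivity), show ((2 : ℕ) : ℝ) * (-3 / 2) = -(3 : ℕ) by norm_num,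
    rpow_neg (by positivity), rpow_natCast, ← inv_pow, inv_div, div_pow]

/-- `∫₀^∞ a^{−3/2} exp(−ba − c/a) da = √(π/c) exp(−2√(bc))` for `b ≥ 0`, `c > 0`. -/
theorem integral_rpow_neg_three_halves_exp (b c : ℝ) (hb : 0 ≤ b) (hc : 0 < c) :
    ∫ a in Set.Ioi (0:ℝ), a ^ (-(3:ℝ)/2) * Real.exp (-(b*a) - c/a)
    = Real.sqrt (π/c) * Real.exp (-(2 * Real.sqrt (b*c))) := by
  calc ∫ a in Ioi 0, a ^ (-(3:ℝ)/2) * exp (-(b*a) - c/a)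
      = ∫ x in Ioi 0, 2 / √c * exp (-x ^ 2 - b * c / x ^ 2) := by
        rw [← integral_comp_div_pow_Ioi _ hc two_ne_zero]
        refine setIntegral_congr_fun measurableSet_Ioi fun x (hx : 0 < x) => ?_
        have hexp : -(b * (c / x ^ 2)) - c / (c / x ^ 2) = -x ^ 2 - b * c / x ^ 2 := by
          field_simp
          ring
        have hc' : √c ^ 3 = c * √c := by rw [pow_succ, sq_sqrt hc.le]
        rw [smul_eq_mul, div_sq_rpow_neg_three_halves hc hx, hexp, ← mul_assoc, hc']
        field_simp
        ring
    _ = √(π / c) * exp (-(2 * √(b * c))) := by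
        rw [integral_const_mul, integral_exp_neg_sq_sub_div_sq_Ioi (mul_nonneg hb hc.le),
          sqrt_div' π hc.le]
        field_simp
end

section
/- For all b₁ > 0 and b₂ > 0, one has ∫₀^∞ erf( b₁·c ) · exp( −b₂²/(4c²) ) · c^{−3} dc = (2/b₂²)·( 1 − exp(−b₁·b₂) ). -/
/-!
Writing `erf (b₁ c) = (2/√π) b₁ c ∫₀¹ exp (-(b₁ c s)²) ds` and exchanging the two integrals, the
inner integral over `c` becomes, after the substitution `c ↦ k / c` with `k = b₂ / 2`, Glasser's
integral `∫₀^∞ exp (-x² - m²/x²) dx = (√π/2) exp (-2m)`; the remaining integral over `s` is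
elementary. Glasser's formula follows from the Cauchy–Schlömilch substitution `u = x - m/x`, a
bijection of `(0, ∞)` onto `ℝ`, together with the invariance of the integrand under `x ↦ m/x`.
-/

open Real MeasureTheory

open Set

section Substitution

variable {E : Type*} [NormedAddCommGroup E] [NormedSpace ℝ E] {m : ℝ}

lemma hasDerivWithinAt_const_div_Ioi (m : ℝ) {x : ℝ} (hx : x ∈ Ioi (0 : ℝ)) :
    HasDerivWithinAt (m / ·) (-(m / x ^ 2)) (Ioi 0) x := by
  simpa only [div_eq_mul_inv, mul_neg] using
    ((hasDerivAt_inv (ne_of_gt hx)).const_mul m).hasDerivWithinAt (s := Ioi 0)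

lemma injOn_const_div_Ioi (hm : m ≠ 0) : InjOn (m / ·) (Ioi (0 : ℝ)) := fun _ _ _ _ h =>
  inv_injective (by simpa [div_eq_mul_inv, hm] using h)

lemma image_const_div_Ioi (hm : 0 < m) : (m / ·) '' Ioi (0 : ℝ) = Ioi 0 := by
  refine Subset.antisymm (image_subset_iff.2 fun x hx => div_pos hm hx) fun y hy => ?_
  exact ⟨m / y, div_pos hm hy, div_div_cancel₀ hm.ne'⟩

lemma abs_neg_const_div_sq (hm : 0 ≤ m) (x : ℝ) : |-(m / x ^ 2)| = m / x ^ 2 := by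
  rw [abs_neg, abs_of_nonneg (by positivity)]

theorem integral_Ioi_comp_const_div (hm : 0 < m) (g : ℝ → E) :
    ∫ x in Ioi 0, (m / x ^ 2) • g (m / x) = ∫ x in Ioi 0, g x := by
  have := integral_image_eq_integral_abs_deriv_smul measurableSet_Ioi
    (fun x hx => hasDerivWithinAt_const_div_Ioi m hx) (injOn_const_div_Ioi hm.ne') g
  simpa only [image_const_div_Ioi hm, abs_neg_const_div_sq hm.le] using this.symm

theorem integrableOn_Ioi_comp_const_div_iff (hm : 0 < m) (g : ℝ → E) :
    IntegrableOn (fun x => (m / x ^ 2) • g (m / x)) (Ioi 0) ↔ IntegrableOn g (Ioi 0) := by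
  have := integrableOn_image_iff_integrableOn_abs_deriv_smul measurableSet_Ioi
    (fun x hx => hasDerivWithinAt_const_div_Ioi m hx) (injOn_const_div_Ioi hm.ne') g
  simpa only [image_const_div_Ioi hm, abs_neg_const_div_sq hm.le] using this.symm

lemma image_sub_const_div_Ioi (hm : 0 < m) : (fun x => x - m / x) '' Ioi (0 : ℝ) = univ := by
  refine eq_univ_of_forall fun u => ?_
  set s := √(u ^ 2 + 4 * m)
  have hs : s ^ 2 = u ^ 2 + 4 * m := sq_sqrt (by positivity)
  have hus : |u| < s := by
    rw [← sqrt_sq_eq_abs]; exact sqrt_lt_sqrt (sq_nonneg u) (by linarith)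
  have hpos : 0 < u + s := by linarith [neg_abs_le u]
  refine ⟨(u + s) / 2, half_pos hpos, ?_⟩
  field_simp
  nlinarith

lemma injOn_sub_const_div_Ioi (hm : 0 < m) : InjOn (fun x => x - m / x) (Ioi (0 : ℝ)) :=
  fun x hx y hy h => by
    have hx : 0 < x := hx
    have hy : 0 < y := hy
    field_simp at h
    nlinarith [mul_pos hx hy]

theorem integral_Ioi_comp_sub_const_div (hm : 0 < m) (g : ℝ → E) :
    ∫ x in Ioi 0, (1 + m / x ^ 2) • g (x - m / x) = ∫ x, g x := by
  have hderiv (x : ℝ) (hx : x ∈ Ioi (0 : ℝ)) :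
      HasDerivWithinAt (fun x => x - m / x) (1 + m / x ^ 2) (Ioi 0) x := by
    simpa only [sub_neg_eq_add] using
      (hasDerivAt_id' x).hasDerivWithinAt.fun_sub (hasDerivWithinAt_const_div_Ioi m hx)
  have := integral_image_eq_integral_abs_deriv_smul measurableSet_Ioi hderiv
    (injOn_sub_const_div_Ioi hm) g
  rw [image_sub_const_div_Ioi hm, setIntegral_univ] at this
  rw [this]
  refine setIntegral_congr_fun measurableSet_Ioi fun x _ => ?_
  rw [abs_of_pos (by positivity)]

end Substitution

section Glasser

lemma integrableOn_exp_neg_sq_sub_div_sq (m : ℝ) :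
    IntegrableOn (fun x => exp (-x ^ 2 - m ^ 2 / x ^ 2)) (Ioi 0) := by
  refine (integrable_exp_neg_mul_sq one_pos).integrableOn.mono' (by fun_prop) ?_
  refine ae_of_all _ fun x => ?_
  rw [norm_of_nonneg (exp_pos _).le, neg_one_mul]
  exact exp_le_exp.2 (sub_le_self _ (by positivity))

lemma exp_neg_sq_sub_div_sq_comp_const_div {m x : ℝ} (hm : m ≠ 0) (hx : x ≠ 0) :
    exp (-(m / x) ^ 2 - m ^ 2 / (m / x) ^ 2) = exp (-x ^ 2 - m ^ 2 / x ^ 2) := by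
  congr 1
  field_simp
  ring

theorem integral_exp_neg_sq_sub_div_sq {m : ℝ} (hm : 0 ≤ m) :
    ∫ x in Ioi 0, exp (-x ^ 2 - m ^ 2 / x ^ 2) = √π / 2 * exp (-2 * m) := by
  rcases hm.eq_or_lt with rfl | hm
  · simpa using integral_gaussian_Ioi 1
  set g : ℝ → ℝ := fun x => exp (-x ^ 2 - m ^ 2 / x ^ 2)
  have hg : IntegrableOn g (Ioi 0) := integrableOn_exp_neg_sq_sub_div_sq m
  -- `x ↦ m / x` preserves `g`, so it turns `∫ g` into `∫ m / x² * g`.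
  have hg_inv : EqOn (fun x => (m / x ^ 2) • g (m / x)) (fun x => m / x ^ 2 * g x) (Ioi 0) :=
    fun x hx => by simp only [smul_eq_mul, g, exp_neg_sq_sub_div_sq_comp_const_div hm.ne' hx.ne']
  have hmg : IntegrableOn (fun x => m / x ^ 2 * g x) (Ioi 0) :=
    ((integrableOn_Ioi_comp_const_div_iff hm g).2 hg).congr_fun hg_inv measurableSet_Ioi
  have hmg_eq : ∫ x in Ioi 0, m / x ^ 2 * g x = ∫ x in Ioi 0, g x := by
    rw [← setIntegral_congr_fun measurableSet_Ioi hg_inv, integral_Ioi_comp_const_div hm]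
  have hsq : EqOn (fun x => (1 + m / x ^ 2) • exp (-(x - m / x) ^ 2))
      (fun x => exp (2 * m) * (g x + m / x ^ 2 * g x)) (Ioi 0) := fun x hx => by
    have : exp (-(x - m / x) ^ 2) = exp (2 * m) * g x := by
      rw [← exp_add]
      congr 1
      field_simp [hx.out.ne']
      ring
    simp only [smul_eq_mul, this]
    ring
  have hgauss : √π = exp (2 * m) * (2 * ∫ x in Ioi 0, g x) := by
    rw [← (by simpa using integral_gaussian 1 : ∫ x : ℝ, exp (-x ^ 2) = √π),
      ← integral_Ioi_comp_sub_const_div hm, setIntegral_congr_fun measurableSet_Ioi hsq,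
      integral_const_mul, integral_add hg hmg, hmg_eq, ← two_mul]
  rw [hgauss, neg_mul, exp_neg]
  field_simp

lemma smul_exp_neg_mul_sq_sub_div_sq_div_sq_comp_const_div (a : ℝ) {k x : ℝ} (hk : k ≠ 0)
    (hx : x ≠ 0) :
    (k / x ^ 2) • (exp (-(a * (k / x)) ^ 2 - k ^ 2 / (k / x) ^ 2) / (k / x) ^ 2)
      = k⁻¹ * exp (-x ^ 2 - (a * k) ^ 2 / x ^ 2) := by
  rw [smul_eq_mul]
  field_simp
  ring_nf

theorem integrableOn_exp_neg_mul_sq_sub_div_sq_div_sq (a : ℝ) {k : ℝ} (hk : 0 < k) :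
    IntegrableOn (fun x => exp (-(a * x) ^ 2 - k ^ 2 / x ^ 2) / x ^ 2) (Ioi 0) := by
  rw [← integrableOn_Ioi_comp_const_div_iff hk, integrableOn_congr_fun (fun x hx =>
    smul_exp_neg_mul_sq_sub_div_sq_div_sq_comp_const_div a hk.ne' hx.out.ne') measurableSet_Ioi]
  exact (integrableOn_exp_neg_sq_sub_div_sq (a * k)).const_mul _

theorem integral_exp_neg_mul_sq_sub_div_sq_div_sq {a k : ℝ} (ha : 0 ≤ a) (hk : 0 < k) :
    ∫ x in Ioi 0, exp (-(a * x) ^ 2 - k ^ 2 / x ^ 2) / x ^ 2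
      = √π / (2 * k) * exp (-2 * a * k) := by
  rw [← integral_Ioi_comp_const_div hk, setIntegral_congr_fun measurableSet_Ioi (fun x hx =>
    smul_exp_neg_mul_sq_sub_div_sq_div_sq_comp_const_div a hk.ne' hx.out.ne'), integral_const_mul,
    integral_exp_neg_sq_sub_div_sq (by positivity)]
  field_simp

end Glasser

lemma erf_eq_mul_integral_Ioc (x : ℝ) :
    erf x = 2 / √π * x * ∫ s in Ioc 0 1, exp (-(x * s) ^ 2) := by
  have := intervalIntegral.smul_integral_comp_mul_left (fun b => exp (-b ^ 2)) x (a := 0) (b := 1)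
  rw [mul_zero, mul_one, smul_eq_mul, intervalIntegral.integral_of_le zero_le_one] at this
  rw [erf, ← this, mul_assoc]

lemma integral_Ioc_zero_one_exp_neg_mul {t : ℝ} (ht : t ≠ 0) :
    ∫ s in Ioc 0 1, exp (-t * s) = (1 - exp (-t)) / t := by
  rw [← intervalIntegral.integral_of_le zero_le_one,
    intervalIntegral.integral_comp_mul_left (fun x => exp x) (neg_ne_zero.2 ht), integral_exp]
  simp only [mul_zero, mul_one, exp_zero, smul_eq_mul]
  ring

theorem integrable_exp_neg_mul_sq_sub_div_sq_div_sq_prod {b k : ℝ} (hb : 0 ≤ b) (hk : 0 < k) :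
    Integrable (fun p : ℝ × ℝ => exp (-(b * p.2 * p.1) ^ 2 - k ^ 2 / p.1 ^ 2) / p.1 ^ 2)
      ((volume.restrict (Ioi 0)).prod (volume.restrict (Ioc 0 1))) := by
  refine (integrable_prod_iff' (Measurable.aestronglyMeasurable (by fun_prop))).2
    ⟨ae_of_all _ fun s => integrableOn_exp_neg_mul_sq_sub_div_sq_div_sq (b * s) hk, ?_⟩
  have hnorm : EqOn (fun s => ∫ c in Ioi 0, ‖exp (-(b * s * c) ^ 2 - k ^ 2 / c ^ 2) / c ^ 2‖)
      (fun s => √π / (2 * k) * exp (-2 * (b * s) * k)) (Ioc 0 1) := fun s hs => by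
    simp only [norm_of_nonneg (div_nonneg (exp_pos _).le (sq_nonneg _))]
    exact integral_exp_neg_mul_sq_sub_div_sq_div_sq (mul_nonneg hb hs.1.le) hk
  exact (integrableOn_congr_fun hnorm measurableSet_Ioc).2
    (Continuous.integrableOn_Ioc (by fun_prop))

/-- `∫₀^∞ erf(b₁ c) exp(−b₂²/(4c²)) c^{−3} dc = (2/b₂²)(1 − exp(−b₁ b₂))`
for `b₁ > 0`, `b₂ > 0`. -/
theorem integral_erf_exp_inv_cube (b₁ b₂ : ℝ) (hb₁ : 0 < b₁) (hb₂ : 0 < b₂) :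
    ∫ c in Set.Ioi (0:ℝ), erf (b₁ * c) * Real.exp (-(b₂^2) / (4*c^2)) / c^3
    = (2 / b₂^2) * (1 - Real.exp (-(b₁*b₂))) := by
  set k := b₂ / 2
  have hk : 0 < k := half_pos hb₂
  let F : ℝ → ℝ → ℝ := fun c s => exp (-(b₁ * s * c) ^ 2 - k ^ 2 / c ^ 2) / c ^ 2
  have hpt : EqOn (fun c => erf (b₁ * c) * exp (-(b₂ ^ 2) / (4 * c ^ 2)) / c ^ 3)
      (fun c => 2 * b₁ / √π * ∫ s in Ioc 0 1, F c s) (Ioi 0) := fun c hc => by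
    have hF (s : ℝ) :
        F c s = exp (-(b₁ * c * s) ^ 2) * (exp (-(b₂ ^ 2) / (4 * c ^ 2)) / c ^ 2) := by
      simp only [F, k]
      rw [mul_div_assoc', ← exp_add]
      congr 2
      ring
    simp only [hF, integral_mul_const, erf_eq_mul_integral_Ioc]
    field_simp [hc.out.ne']
  have hinner : EqOn (fun s => ∫ c in Ioi 0, F c s)
      (fun s => √π / b₂ * exp (-(b₁ * b₂) * s)) (Ioc 0 1) := fun s hs => by
    simp only [F, integral_exp_neg_mul_sq_sub_div_sq_div_sq (mul_nonneg hb₁.le hs.1.le) hk, k]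
    ring_nf
  rw [setIntegral_congr_fun measurableSet_Ioi hpt, integral_const_mul,
    integral_integral_swap (integrable_exp_neg_mul_sq_sub_div_sq_div_sq_prod hb₁.le hk),
    setIntegral_congr_fun measurableSet_Ioc hinner, integral_const_mul,
    integral_Ioc_zero_one_exp_neg_mul (by positivity)]
  field_simp
end
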